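/- arXiv:0801.4084 — 2 statements merged into one kernel-verified Lean document; each statement's English description precedes it below -/
import Mathlib

section
/- If A^μ lies strictly inside the forward light cone (A₀ > 0 and A₀² > A₁²+A₂²+A₃²), and B = diag(B₀,−B₁,−B₂,−B₃) with B₀ > B_i and B₁, B₂, B₃ pairwise distinct and A₁, A₂, A₃ all nonzero, then V has at least two distinct nontrivial critical points on the forward light cone. -/
open Matrix

/-- The Minkowski metric diag(1,−1,−1,−1). -/
noncomputable def eta : Matrix (Fin 4) (Fin 4) ℝ :=
  Matrix.diagonal ![1, -1, -1, -1]

/-!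
Solving the Lagrange equations at multiplier `x` gives `r₀ = A₀ / (B₀ - x)`, `rᵢ = Aᵢ / (Bᵢ - x)`,
and `r` lies on the cone exactly when the secular function
`∑ Aᵢ² / (Bᵢ - x)² - A₀² / (B₀ - x)²` vanishes. Multiplied by `(B₀ - x)²` it tends to
`∑ Aᵢ² - A₀² < 0` as `x → -∞`; it tends to `+∞` at every pole `Bᵢ` and to `-∞` as `x → B₀⁻`.
Hence it has a root below `min Bᵢ` and another in `(max Bᵢ, B₀)`, and the two roots give different
values of `r₀`.
-/

open Filter Topology Set

lemma tendsto_sq_div_sub_sq_nhdsNE {c : ℝ} (d : ℝ) (hc : c ≠ 0) :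
    Tendsto (fun x => c ^ 2 / (d - x) ^ 2) (𝓝[≠] d) atTop := by
  have hsq : Tendsto (fun x => (d - x) ^ 2) (𝓝[≠] d) (𝓝[>] 0) := by
    refine tendsto_nhdsWithin_iff.2 ⟨?_, ?_⟩
    · have : Continuous fun x : ℝ => (d - x) ^ 2 := by fun_prop
      simpa using (this.tendsto d).mono_left nhdsWithin_le_nhds
    · filter_upwards [self_mem_nhdsWithin] with x hx
      have : d - x ≠ 0 := sub_ne_zero.2 (Ne.symm hx)
      exact mem_Ioi.2 (by positivity)
  simpa [div_eq_mul_inv] using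
    hsq.inv_tendsto_nhdsGT_zero.const_mul_atTop (by positivity : 0 < c ^ 2)

lemma tendsto_sub_div_sub_atBot (c d : ℝ) :
    Tendsto (fun x => (c - x) / (d - x)) atBot (𝓝 1) := by
  have hd : Tendsto (fun x : ℝ => d - x) atBot atTop :=
    tendsto_atTop_add_const_left _ _ tendsto_neg_atBot_atTop
  have h := ((tendsto_const_nhds (x := c - d)).div_atTop hd).const_add 1
  rw [add_zero] at h
  refine h.congr' ?_
  filter_upwards [eventually_lt_atBot d] with x hx
  field_simp [(sub_pos.2 hx).ne']
  ring

section Secular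

variable {ι : Type*} [Fintype ι] (a b : ι → ℝ) (a₀ b₀ : ℝ)

noncomputable def secular (x : ℝ) : ℝ :=
  ∑ i, a i ^ 2 / (b i - x) ^ 2 - a₀ ^ 2 / (b₀ - x) ^ 2

variable {a b a₀ b₀}

lemma continuousAt_secular {x : ℝ} (h₀ : b₀ ≠ x) (h : ∀ i, b i ≠ x) :
    ContinuousAt (secular a b a₀ b₀) x := by
  unfold secular
  fun_prop (disch := simp [sub_eq_zero, h₀, h])

lemma continuousOn_secular {s : Set ℝ} (h₀ : b₀ ∉ s) (h : ∀ i, b i ∉ s) :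
    ContinuousOn (secular a b a₀ b₀) s := fun _ hx =>
  (continuousAt_secular (ne_of_mem_of_not_mem hx h₀).symm
    fun i => (ne_of_mem_of_not_mem hx (h i)).symm).continuousWithinAt

lemma tendsto_secular_nhdsNE_atTop (j : ι) (hb : b₀ ≠ b j) (ha : a j ≠ 0) :
    Tendsto (secular a b a₀ b₀) (𝓝[≠] b j) atTop := by
  have hpole : Tendsto (fun x => a j ^ 2 / (b j - x) ^ 2 - a₀ ^ 2 / (b₀ - x) ^ 2)
      (𝓝[≠] b j) atTop := by
    have hcont : ContinuousAt (fun x => a₀ ^ 2 / (b₀ - x) ^ 2) (b j) := by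
      fun_prop (disch := simp [sub_eq_zero, hb])
    simpa [sub_eq_add_neg] using (tendsto_sq_div_sub_sq_nhdsNE (b j) ha).atTop_add
      (hcont.neg.tendsto.mono_left nhdsWithin_le_nhds)
  refine tendsto_atTop_mono (fun x => sub_le_sub_right ?_ _) hpole
  exact Finset.single_le_sum (f := fun i => a i ^ 2 / (b i - x) ^ 2)
    (fun i _ => by positivity) (Finset.mem_univ j)

lemma tendsto_secular_nhdsNE_atBot (hb : ∀ i, b i ≠ b₀) (ha₀ : a₀ ≠ 0) :
    Tendsto (secular a b a₀ b₀) (𝓝[≠] b₀) atBot := by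
  have hcont : ContinuousAt (fun x => ∑ i, a i ^ 2 / (b i - x) ^ 2) b₀ := by
    fun_prop (disch := simp [sub_eq_zero, hb])
  exact (hcont.tendsto.mono_left nhdsWithin_le_nhds).add_atBot
    (tendsto_neg_atTop_atBot.comp (tendsto_sq_div_sub_sq_nhdsNE b₀ ha₀))

lemma tendsto_sq_mul_secular_atBot :
    Tendsto (fun x => (b₀ - x) ^ 2 * secular a b a₀ b₀ x) atBot
      (𝓝 (∑ i, a i ^ 2 - a₀ ^ 2)) := by
  have hterm (i : ι) : Tendsto (fun x => a i ^ 2 * ((b₀ - x) / (b i - x)) ^ 2) atBot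
      (𝓝 (a i ^ 2)) := by
    simpa using ((tendsto_sub_div_sub_atBot b₀ (b i)).pow 2).const_mul (a i ^ 2)
  refine ((tendsto_finsetSum _ fun i _ => hterm i).sub_const (a₀ ^ 2)).congr' ?_
  filter_upwards [eventually_lt_atBot b₀] with x hx
  have : b₀ - x ≠ 0 := (sub_pos.2 hx).ne'
  rw [secular, mul_sub, Finset.mul_sum]
  congr 1
  · exact Finset.sum_congr rfl fun i _ => by rw [div_pow]; ring
  · field_simp

lemma eventually_secular_neg_atBot (h : ∑ i, a i ^ 2 < a₀ ^ 2) :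
    ∀ᶠ x in atBot, secular a b a₀ b₀ x < 0 := by
  filter_upwards [tendsto_sq_mul_secular_atBot.eventually_lt_const (sub_neg.2 h)] with x hx
  exact neg_of_mul_neg_right hx (sq_nonneg _)

variable [Nonempty ι]

lemma exists_secular_eq_zero_below (h : ∑ i, a i ^ 2 < a₀ ^ 2) (hb : ∀ i, b i < b₀)
    (ha : ∀ i, a i ≠ 0) : ∃ x, (∀ i, x < b i) ∧ secular a b a₀ b₀ x = 0 := by
  obtain ⟨j, hj⟩ := Finite.exists_min b
  obtain ⟨c, hc, hcj⟩ := (eventually_secular_neg_atBot (b := b) (b₀ := b₀) h |>.and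
    (eventually_lt_atBot (b j))).exists
  have hcont : ContinuousOn (secular a b a₀ b₀) (Iio (b j)) :=
    continuousOn_secular (fun h' => (hb j).not_gt h') fun i h' => (hj i).not_gt h'
  have hpole : Tendsto (secular a b a₀ b₀) (𝓝[<] b j) atTop :=
    (tendsto_secular_nhdsNE_atTop j (hb j).ne' (ha j)).mono_left
      (nhdsWithin_mono _ fun _ hx => ne_of_lt hx)
  obtain ⟨x, hx, hx0⟩ := isPreconnected_Iio.intermediate_value_Ici (l := 𝓝[<] b j) hcj
    inf_le_right hcont hpole (mem_Ici.2 hc.le)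
  exact ⟨x, fun i => (mem_Iio.1 hx).trans_le (hj i), hx0⟩

lemma exists_secular_eq_zero_between (ha₀ : a₀ ≠ 0) (hb : ∀ i, b i < b₀)
    (ha : ∀ i, a i ≠ 0) : ∃ x, (∀ i, b i < x) ∧ x < b₀ ∧ secular a b a₀ b₀ x = 0 := by
  obtain ⟨k, hk⟩ := Finite.exists_max b
  have hcont : ContinuousOn (secular a b a₀ b₀) (Ioo (b k) b₀) :=
    continuousOn_secular (fun h' => h'.2.false) fun i h' => (hk i).not_gt h'.1
  have hleft : Tendsto (secular a b a₀ b₀) (𝓝[<] b₀) atBot :=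
    (tendsto_secular_nhdsNE_atBot (fun i => (hb i).ne) ha₀).mono_left
      (nhdsWithin_mono _ fun _ hx => ne_of_lt hx)
  have hright : Tendsto (secular a b a₀ b₀) (𝓝[>] b k) atTop :=
    (tendsto_secular_nhdsNE_atTop k (hb k).ne' (ha k)).mono_left
      (nhdsWithin_mono _ fun _ hx => ne_of_gt hx)
  obtain ⟨x, hx, hx0⟩ := isPreconnected_Ioo.intermediate_value_Iii
    (le_principal_iff.2 (Ioo_mem_nhdsLT (hb k))) (le_principal_iff.2 (Ioo_mem_nhdsGT (hb k)))
    hcont hleft hright (mem_univ 0)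
  exact ⟨x, fun i => (hk i).trans_lt hx.1, hx.2, hx0⟩

end Secular

noncomputable def lagrangeSolution (A : Fin 4 → ℝ) (B₀ : ℝ) (Bs : Fin 3 → ℝ) (x : ℝ) :
    Fin 4 → ℝ :=
  ![A 0 / (B₀ - x), A 1 / (Bs 0 - x), A 2 / (Bs 1 - x), A 3 / (Bs 2 - x)]

lemma lagrangeSolution_spec {A : Fin 4 → ℝ} {B₀ : ℝ} {Bs : Fin 3 → ℝ} {x : ℝ}
    (hA0 : 0 < A 0) (hx : x < B₀) (hBs : ∀ i, Bs i ≠ x)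
    (hroot : secular (fun i => A i.succ) Bs (A 0) B₀ x = 0) :
    let r := lagrangeSolution A B₀ Bs x
    0 < r 0 ∧ r ⬝ᵥ eta.mulVec r = 0 ∧
      (eta * Matrix.diagonal ![B₀, -(Bs 0), -(Bs 1), -(Bs 2)] * eta).mulVec r
        - x • eta.mulVec r = eta.mulVec A := by
  have h0 : B₀ - x ≠ 0 := (sub_pos.2 hx).ne'
  have h1 := sub_ne_zero.2 (hBs 0)
  have h2 := sub_ne_zero.2 (hBs 1)
  have h3 := sub_ne_zero.2 (hBs 2)
  simp only [secular, Fin.sum_univ_three, Fin.succ_zero_eq_one, Fin.succ_one_eq_two,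
    show (2 : Fin 3).succ = 3 from rfl, div_eq_mul_inv, ← inv_pow] at hroot
  refine ⟨div_pos hA0 (sub_pos.2 hx), ?_, ?_⟩
  · simp [lagrangeSolution, eta, dotProduct, Matrix.mulVec_diagonal, Fin.sum_univ_four]
    linear_combination -hroot
  · funext i
    fin_cases i <;>
      simp [lagrangeSolution, eta, Matrix.diagonal_mul_diagonal, Matrix.mulVec_diagonal] <;>
      field_simp <;> ring

theorem stmt12_general (A : Fin 4 → ℝ) (hA0 : 0 < A 0)
    (hAin : (A 1) ^ 2 + (A 2) ^ 2 + (A 3) ^ 2 < (A 0) ^ 2)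
    (B₀ : ℝ) (Bs : Fin 3 → ℝ) (hB : ∀ i, Bs i < B₀)
    (hA : ∀ i : Fin 3, A i.succ ≠ 0) :
    let Bup : Matrix (Fin 4) (Fin 4) ℝ :=
      Matrix.diagonal ![B₀, -(Bs 0), -(Bs 1), -(Bs 2)]
    let crit : (Fin 4 → ℝ) → Prop := fun r =>
      0 < r 0 ∧ r ⬝ᵥ eta.mulVec r = 0 ∧
        ∃ lam : ℝ, (eta * Bup * eta).mulVec r - lam • eta.mulVec r = eta.mulVec A
    ∃ r r' : Fin 4 → ℝ, crit r ∧ crit r' ∧ r ≠ r' := by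
  intro Bup crit
  have hsum : ∑ i : Fin 3, A i.succ ^ 2 < A 0 ^ 2 := by simpa [Fin.sum_univ_three] using hAin
  obtain ⟨x₁, hx₁, hroot₁⟩ := exists_secular_eq_zero_below hsum hB hA
  obtain ⟨x₂, hx₂, hx₂B, hroot₂⟩ := exists_secular_eq_zero_between hA0.ne' hB hA
  have hx₁B : x₁ < B₀ := (hx₁ 0).trans (hB 0)
  obtain ⟨hpos₁, hcone₁, heq₁⟩ :=
    lagrangeSolution_spec hA0 hx₁B (fun i => (hx₁ i).ne') hroot₁
  obtain ⟨hpos₂, hcone₂, heq₂⟩ :=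
    lagrangeSolution_spec hA0 hx₂B (fun i => (hx₂ i).ne) hroot₂
  refine ⟨_, _, ⟨hpos₁, hcone₁, x₁, heq₁⟩, ⟨hpos₂, hcone₂, x₂, heq₂⟩, fun h => ?_⟩
  have h0 : A 0 / (B₀ - x₁) = A 0 / (B₀ - x₂) := congrFun h 0
  exact (div_lt_div_of_pos_left hA0 (sub_pos.2 hx₂B)
    (by linarith [(hx₁ 0).trans (hx₂ 0)])).ne h0

/-- if A^μ lies strictly inside the forward light cone,
B = diag(B₀,−B₁,−B₂,−B₃) with B₀ > Bᵢ and B₁, B₂, B₃ pairwise distinct and all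
Aᵢ ≠ 0, then V has at least two distinct nontrivial critical points (points of
the forward light cone satisfying the Lagrange equations) on the cone. -/
theorem stmt12 (A : Fin 4 → ℝ) (hA0 : 0 < A 0)
    (hAin : (A 1) ^ 2 + (A 2) ^ 2 + (A 3) ^ 2 < (A 0) ^ 2)
    (B₀ : ℝ) (Bs : Fin 3 → ℝ) (hB : ∀ i, Bs i < B₀)
    (hdist : Function.Injective Bs) (hA : ∀ i : Fin 3, A i.succ ≠ 0) :
    let Bup : Matrix (Fin 4) (Fin 4) ℝ :=
      Matrix.diagonal ![B₀, -(Bs 0), -(Bs 1), -(Bs 2)]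
    let crit : (Fin 4 → ℝ) → Prop := fun r =>
      0 < r 0 ∧ r ⬝ᵥ eta.mulVec r = 0 ∧
        ∃ lam : ℝ, (eta * Bup * eta).mulVec r - lam • eta.mulVec r = eta.mulVec A
    ∃ r r' : Fin 4 → ℝ, crit r ∧ crit r' ∧ r ≠ r' :=
  stmt12_general A hA0 hAin B₀ Bs hB hA
end

section
/- For the representative point A = (A₀, 0, 0, 0) with A₀ > 0, and B = diag(B₀, −B₁, −B₂, −B₃) with B₀ > B₁ > B₂ > B₃ (all distinct), the critical points of V on the forward light cone are exactly r₀ = A₀/(B₀−B_i), n = ±e_i for i = 1,2,3 (six points), and the global minimum value is attained precisely at the two points with n = ±e₁ (the direction of the largest B_i, here B₁ being the largest among B₁,B₂,B₃ requires B₁ > B₂, B₃), where V = −A₀²/(2(B₀−B₁)). -/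
/-!
Write `r = (r₀, x)`. On the cone the Lagrange conditions read `r₀ (B₀ - λ) = A₀` and
`(λ - Bᵢ) xᵢ = 0`. As `x ≠ 0` and the `Bᵢ` are distinct, `λ = Bₖ` for exactly one `k`, all other
`xᵢ` vanish, and the cone equation forces `xₖ = ±r₀`.

For the minimum let `Bₖ` be the largest `Bᵢ`. Eliminating `r₀²` with the cone equation and
completing the square gives
`2 (B₀ - Bₖ) V + A₀² = ((B₀ - Bₖ) r₀ - A₀)² + (B₀ - Bₖ) ∑ᵢ (Bₖ - Bᵢ) xᵢ²`,
a sum of two nonnegative terms which vanish together exactly when `r₀ = A₀ / (B₀ - Bₖ)` and `x`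
lies on the `k`-th axis.
-/

open Matrix

open Function

namespace LightCone

variable {n : ℕ}

noncomputable def minkowski (n : ℕ) : Matrix (Fin (n + 1)) (Fin (n + 1)) ℝ :=
  diagonal (Fin.cons 1 (-1))

theorem eta_eq_minkowski : eta = minkowski 3 := by
  rw [eta, minkowski]
  congr 1
  ext μ
  fin_cases μ <;> rfl

theorem minkowski_mulVec (r : Fin (n + 1) → ℝ) :
    minkowski n *ᵥ r = Fin.cons (r 0) (-Fin.tail r) := by
  ext μ
  refine Fin.cases ?_ (fun i => ?_) μ <;> simp [minkowski, mulVec_diagonal, Fin.tail]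

theorem dotProduct_minkowski_mulVec (r : Fin (n + 1) → ℝ) :
    r ⬝ᵥ minkowski n *ᵥ r = r 0 ^ 2 - ∑ i : Fin n, r i.succ ^ 2 := by
  simp [minkowski_mulVec, dotProduct, Fin.sum_univ_succ, Fin.tail, sq, sub_eq_add_neg]

theorem minkowski_mul_diagonal_mul_minkowski (d : Fin (n + 1) → ℝ) :
    minkowski n * diagonal d * minkowski n = diagonal d := by
  rw [minkowski, diagonal_mul_diagonal, diagonal_mul_diagonal]
  congr 1
  ext μ
  refine Fin.cases ?_ (fun i => ?_) μ <;> simp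

theorem lagrange_eq_iff (A₀ B₀ lam : ℝ) (B : Fin n → ℝ) (r : Fin (n + 1) → ℝ) :
    (minkowski n * diagonal (Fin.cons B₀ (-B)) * minkowski n) *ᵥ r - lam • minkowski n *ᵥ r
        = minkowski n *ᵥ Fin.cons A₀ 0 ↔
      r 0 * (B₀ - lam) = A₀ ∧ ∀ i, (lam - B i) * r i.succ = 0 := by
  rw [minkowski_mul_diagonal_mul_minkowski, funext_iff, Fin.forall_fin_succ]
  simp only [minkowski_mulVec, mulVec_diagonal, Pi.sub_apply, Pi.smul_apply, Fin.cons_zero,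
    Fin.cons_succ, Fin.tail, Pi.neg_apply, Pi.zero_apply, smul_eq_mul]
  exact and_congr ⟨fun h => by linarith, fun h => by linarith⟩
    (forall_congr' fun i => ⟨fun h => by linarith, fun h => by linarith⟩)

def axisPoint (t : ℝ) (i : Fin n) (s : ℝ) : Fin (n + 1) → ℝ :=
  fun μ => if μ = 0 then t else if μ = i.succ then s * t else 0

theorem eq_axisPoint_iff {r : Fin (n + 1) → ℝ} {t s : ℝ} {k : Fin n} :
    r = axisPoint t k s ↔ r 0 = t ∧ r k.succ = s * t ∧ ∀ j ≠ k, r j.succ = 0 := by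
  constructor
  · rintro rfl
    exact ⟨by simp [axisPoint], by simp [axisPoint], fun j hj => by simp [axisPoint, hj]⟩
  · rintro ⟨h0, hk, hj⟩
    ext μ
    refine Fin.cases (by simpa [axisPoint]) (fun j => ?_) μ
    by_cases hjk : j = k
    · subst hjk
      simpa [axisPoint]
    · simpa [axisPoint, hjk] using hj j hjk

theorem axisPoint_sq_eq_sum {t s : ℝ} (k : Fin n) (hs : s = 1 ∨ s = -1) :
    axisPoint t k s 0 ^ 2 = ∑ i : Fin n, axisPoint t k s i.succ ^ 2 := by
  rw [Finset.sum_eq_single k (fun j _ hj => by simp [axisPoint, hj]) (by simp)]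
  rcases hs with rfl | rfl <;> simp [axisPoint]

theorem eq_axisPoint_or_iff {r : Fin (n + 1) → ℝ} {t : ℝ} {k : Fin n}
    (hcone : r 0 ^ 2 = ∑ i : Fin n, r i.succ ^ 2) :
    r = axisPoint t k 1 ∨ r = axisPoint t k (-1) ↔ r 0 = t ∧ ∀ j ≠ k, r j.succ = 0 := by
  simp only [eq_axisPoint_iff]
  constructor
  · rintro (⟨h0, -, hj⟩ | ⟨h0, -, hj⟩) <;> exact ⟨h0, hj⟩
  · rintro ⟨rfl, hj⟩
    have hsum : ∑ i : Fin n, r i.succ ^ 2 = r k.succ ^ 2 :=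
      Finset.sum_eq_single k (fun j _ hjk => by simp [hj j hjk]) (by simp)
    rcases sq_eq_sq_iff_eq_or_eq_neg.1 (hcone.trans hsum).symm with h | h
    · exact Or.inl ⟨rfl, by simpa using h, hj⟩
    · exact Or.inr ⟨rfl, by simpa using h, hj⟩

section Critical

variable {A₀ B₀ : ℝ} {B : Fin n → ℝ}

theorem exists_axisPoint_of_critical (hB₀ : ∀ i, B i < B₀) (hB : Injective B)
    {r : Fin (n + 1) → ℝ} {lam : ℝ} (hr0 : 0 < r 0) (hcone : r 0 ^ 2 = ∑ i : Fin n, r i.succ ^ 2)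
    (htime : r 0 * (B₀ - lam) = A₀) (hspace : ∀ i, (lam - B i) * r i.succ = 0) :
    ∃ i s, (s = 1 ∨ s = -1) ∧ r = axisPoint (A₀ / (B₀ - B i)) i s := by
  obtain ⟨k, hk⟩ : ∃ k : Fin n, r k.succ ≠ 0 := by
    by_contra! h
    simp [h] at hcone
    exact hr0.ne' hcone
  have hlam : lam = B k := sub_eq_zero.1 ((mul_eq_zero.1 (hspace k)).resolve_right hk)
  have hoff : ∀ j ≠ k, r j.succ = 0 := fun j hj =>
    (mul_eq_zero.1 (hspace j)).resolve_left (hlam ▸ sub_ne_zero.2 (hB.ne hj.symm))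
  have htime' : r 0 = A₀ / (B₀ - B k) := by
    rw [eq_div_iff (sub_pos.2 (hB₀ k)).ne', ← hlam, htime]
  rcases (eq_axisPoint_or_iff hcone).2 ⟨htime', hoff⟩ with h | h
  · exact ⟨k, 1, Or.inl rfl, h⟩
  · exact ⟨k, -1, Or.inr rfl, h⟩

theorem critical_iff (hA₀ : 0 < A₀) (hB₀ : ∀ i, B i < B₀) (hB : Injective B)
    (r : Fin (n + 1) → ℝ) :
    (0 < r 0 ∧ r ⬝ᵥ minkowski n *ᵥ r = 0 ∧ ∃ lam : ℝ,
        (minkowski n * diagonal (Fin.cons B₀ (-B)) * minkowski n) *ᵥ r - lam • minkowski n *ᵥ r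
          = minkowski n *ᵥ Fin.cons A₀ 0) ↔
      ∃ i s, (s = 1 ∨ s = -1) ∧ r = axisPoint (A₀ / (B₀ - B i)) i s := by
  simp only [dotProduct_minkowski_mulVec, sub_eq_zero, lagrange_eq_iff]
  constructor
  · rintro ⟨hr0, hcone, lam, htime, hspace⟩
    exact exists_axisPoint_of_critical hB₀ hB hr0 hcone htime hspace
  · rintro ⟨i, s, hs, rfl⟩
    have hgap : 0 < B₀ - B i := sub_pos.2 (hB₀ i)
    refine ⟨by simpa [axisPoint] using div_pos hA₀ hgap, axisPoint_sq_eq_sum i hs, B i,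
      by simp [axisPoint, hgap.ne'], fun j => ?_⟩
    by_cases hj : j = i
    · simp [hj]
    · simp [axisPoint, hj]

end Critical

noncomputable def potential (A : Fin (n + 1) → ℝ) (M : Matrix (Fin (n + 1)) (Fin (n + 1)) ℝ)
    (r : Fin (n + 1) → ℝ) : ℝ :=
  -((minkowski n *ᵥ A) ⬝ᵥ r) + (1 / 2 : ℝ) * (r ⬝ᵥ (minkowski n * M * minkowski n) *ᵥ r)

section Minimum

variable {A₀ B₀ : ℝ} {B : Fin n → ℝ} {r : Fin (n + 1) → ℝ} {k : Fin n}

theorem potential_eq (A₀ B₀ : ℝ) (B : Fin n → ℝ) (r : Fin (n + 1) → ℝ) :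
    potential (Fin.cons A₀ 0) (diagonal (Fin.cons B₀ (-B))) r
      = -(A₀ * r 0) + (B₀ * r 0 ^ 2 - ∑ i : Fin n, B i * r i.succ ^ 2) / 2 := by
  simp [potential, minkowski_mul_diagonal_mul_minkowski, minkowski_mulVec, mulVec_diagonal,
    dotProduct, Fin.sum_univ_succ]
  simp only [fun i : Fin n => show r i.succ * (B i * r i.succ) = B i * r i.succ ^ 2 by ring]
  ring

theorem two_mul_potential_add_sq (k : Fin n) (hcone : r 0 ^ 2 = ∑ i : Fin n, r i.succ ^ 2) :
    2 * (B₀ - B k) * potential (Fin.cons A₀ 0) (diagonal (Fin.cons B₀ (-B))) r + A₀ ^ 2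
      = ((B₀ - B k) * r 0 - A₀) ^ 2 + (B₀ - B k) * ∑ i, (B k - B i) * r i.succ ^ 2 := by
  have hsum : ∑ i, (B k - B i) * r i.succ ^ 2 = B k * r 0 ^ 2 - ∑ i, B i * r i.succ ^ 2 := by
    rw [hcone, Finset.mul_sum, ← Finset.sum_sub_distrib]
    simp only [sub_mul]
  rw [potential_eq, hsum]
  ring

theorem neg_sq_div_le_potential (hk : ∀ i, B i ≤ B k) (hkB₀ : B k < B₀)
    (hcone : r 0 ^ 2 = ∑ i : Fin n, r i.succ ^ 2) :
    -A₀ ^ 2 / (2 * (B₀ - B k)) ≤ potential (Fin.cons A₀ 0) (diagonal (Fin.cons B₀ (-B))) r := by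
  have hgap : 0 < B₀ - B k := sub_pos.2 hkB₀
  have hsum : 0 ≤ ∑ i, (B k - B i) * r i.succ ^ 2 :=
    Finset.sum_nonneg fun i _ => mul_nonneg (sub_nonneg.2 (hk i)) (sq_nonneg _)
  rw [div_le_iff₀ (by positivity)]
  nlinarith [two_mul_potential_add_sq (A₀ := A₀) (B₀ := B₀) (B := B) k hcone,
    sq_nonneg ((B₀ - B k) * r 0 - A₀), mul_nonneg hgap.le hsum]

theorem potential_eq_neg_sq_div_iff (hk : ∀ i ≠ k, B i < B k) (hkB₀ : B k < B₀)
    (hcone : r 0 ^ 2 = ∑ i : Fin n, r i.succ ^ 2) :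
    potential (Fin.cons A₀ 0) (diagonal (Fin.cons B₀ (-B))) r = -A₀ ^ 2 / (2 * (B₀ - B k)) ↔
      r 0 = A₀ / (B₀ - B k) ∧ ∀ j ≠ k, r j.succ = 0 := by
  have hgap : 0 < B₀ - B k := sub_pos.2 hkB₀
  have hterm : ∀ i, 0 ≤ (B k - B i) * r i.succ ^ 2 := fun i => by
    rcases eq_or_ne i k with rfl | hi
    · simp
    · exact mul_nonneg (sub_nonneg.2 (hk i hi).le) (sq_nonneg _)
  have hsum_eq_zero : ∑ i, (B k - B i) * r i.succ ^ 2 = 0 ↔ ∀ j ≠ k, r j.succ = 0 := by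
    rw [Finset.sum_eq_zero_iff_of_nonneg fun i _ => hterm i]
    refine ⟨fun h j hj => ?_, fun h i _ => ?_⟩
    · simpa [(sub_pos.2 (hk j hj)).ne'] using h j (Finset.mem_univ j)
    · rcases eq_or_ne i k with rfl | hi
      · simp
      · simp [h i hi]
  rw [eq_div_iff (by positivity), eq_div_iff hgap.ne', ← hsum_eq_zero, mul_comm,
    ← add_eq_zero_iff_eq_neg, two_mul_potential_add_sq k hcone,
    add_eq_zero_iff_of_nonneg (sq_nonneg _)
      (mul_nonneg hgap.le (Finset.sum_nonneg fun i _ => hterm i)),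
    sq_eq_zero_iff, sub_eq_zero, mul_eq_zero, or_iff_right hgap.ne', mul_comm]

end Minimum

end LightCone

open LightCone in
/-- for A = (A₀,0,0,0), A₀ > 0, and B = diag(B₀,−B₁,−B₂,−B₃) with
B₀ > B₁ > B₂ > B₃, the critical points of V on the forward light cone are exactly
the six points with r₀ = A₀/(B₀−Bᵢ), n = ±eᵢ, and the global minimum value
−A₀²/(2(B₀−B₁)) is attained precisely at the two points with n = ±e₁. -/
theorem stmt13 (A₀ : ℝ) (hA₀ : 0 < A₀) (B₀ B₁ B₂ B₃ : ℝ)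
    (h01 : B₁ < B₀) (h12 : B₂ < B₁) (h23 : B₃ < B₂) :
    let Bs : Fin 3 → ℝ := ![B₁, B₂, B₃]
    let A : Fin 4 → ℝ := ![A₀, 0, 0, 0]
    let Bup : Matrix (Fin 4) (Fin 4) ℝ := Matrix.diagonal ![B₀, -B₁, -B₂, -B₃]
    let V : (Fin 4 → ℝ) → ℝ := fun r =>
      -((eta.mulVec A) ⬝ᵥ r) + (1 / 2 : ℝ) * (r ⬝ᵥ (eta * Bup * eta).mulVec r)
    let cone : Set (Fin 4 → ℝ) :=
      {r | 0 ≤ r 0 ∧ (r 0) ^ 2 = (r 1) ^ 2 + (r 2) ^ 2 + (r 3) ^ 2}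
    let pt : Fin 3 → ℝ → (Fin 4 → ℝ) := fun i s =>
      fun μ => if μ = 0 then A₀ / (B₀ - Bs i)
        else if μ = i.succ then s * (A₀ / (B₀ - Bs i)) else 0
    -- the critical points on the punctured cone are exactly the six points pt i (±1)
    ({r : Fin 4 → ℝ | 0 < r 0 ∧ r ⬝ᵥ eta.mulVec r = 0 ∧
        ∃ lam : ℝ, (eta * Bup * eta).mulVec r - lam • eta.mulVec r = eta.mulVec A}
      = {r | ∃ (i : Fin 3) (s : ℝ), (s = 1 ∨ s = -1) ∧ r = pt i s}) ∧
    -- the global minimum value is −A₀²/(2(B₀−B₁)) ...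
    (∀ r ∈ cone, -A₀ ^ 2 / (2 * (B₀ - B₁)) ≤ V r) ∧
    -- ... attained precisely at the two points pt 0 (±1)
    (∀ r ∈ cone, (V r = -A₀ ^ 2 / (2 * (B₀ - B₁)) ↔ r = pt 0 1 ∨ r = pt 0 (-1))) := by
  intro Bs A Bup V cone pt
  have hA : A = Fin.cons A₀ 0 := by ext μ; fin_cases μ <;> rfl
  have hBup : Bup = diagonal (Fin.cons B₀ (-Bs)) := by
    simp only [Bup]; congr 1; ext μ; fin_cases μ <;> rfl
  have hV : ∀ r, V r = potential (Fin.cons A₀ 0) (diagonal (Fin.cons B₀ (-Bs))) r := fun r => by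
    simp only [V, potential, eta_eq_minkowski, hA, hBup]
  have hcone : ∀ r ∈ cone, r 0 ^ 2 = ∑ i : Fin 3, r i.succ ^ 2 := fun r hr => by
    rw [Fin.sum_univ_three]; exact hr.2
  have hB₀ : ∀ i, Bs i < B₀ := by simp [Fin.forall_fin_succ, Bs]; grind
  have hB₁ : ∀ i ≠ 0, Bs i < Bs 0 := by simp [Fin.forall_fin_succ, Bs]; grind
  have hB₁_le : ∀ i, Bs i ≤ Bs 0 := by simp [Fin.forall_fin_succ, Bs]; grind
  have hBs : Injective Bs := by
    intro i j h; fin_cases i <;> fin_cases j <;> simp [Bs] at h ⊢ <;> linarith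
  refine ⟨?_, fun r hr => ?_, fun r hr => ?_⟩
  · rw [eta_eq_minkowski, hA, hBup]
    ext r
    exact critical_iff hA₀ hB₀ hBs r
  · rw [hV]
    exact neg_sq_div_le_potential hB₁_le (hB₀ 0) (hcone r hr)
  · rw [hV]
    exact (potential_eq_neg_sq_div_iff hB₁ (hB₀ 0) (hcone r hr)).trans
      (eq_axisPoint_or_iff (hcone r hr)).symm
end
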